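/- Let V be a symplectic vector space over 𝔽_ℓ (ℓ an odd prime) with form ⟨·,·⟩, let δ ∈ V be nonzero, and let σ(γ) = γ − ⟨γ, δ⟩·δ be the associated transvection. Fix γ ∈ V with σ(γ) ≠ γ, and set δ' = σ(γ) − γ and a = ⟨γ, δ'⟩. Then a = −⟨γ, δ⟩² ≠ 0, −a is a nonzero square in 𝔽_ℓ, and δ = ± c·δ' where c = ±√(−a^{−1}). In particular δ is determined up to sign by γ, σ(γ), and the pairing. -/
import Mathlib


/-- Recovering the vanishing cycle from the local monodromy: let `V` be a symplectic vector
space over `𝔽_ℓ` (`ℓ` an odd prime) with form `B`, `δ ≠ 0`, and `σ(γ) = γ - B(γ,δ) • δ` the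
associated transvection. Fix `γ` with `σ(γ) ≠ γ`, set `δ' = σ(γ) - γ` and `a = B(γ, δ')`.
Then `a = -B(γ,δ)² ≠ 0`, `-a` is a nonzero square in `𝔽_ℓ`, and `δ = ± c • δ'` where
`c = ±√(-a⁻¹)`; in particular `δ` is determined up to sign. -/
theorem vanishing_cycle_from_transvection
    (ℓ : ℕ) [Fact (Nat.Prime ℓ)] (hℓ : ℓ ≠ 2)
    {V : Type*} [AddCommGroup V] [Module (ZMod ℓ) V] [FiniteDimensional (ZMod ℓ) V]
    (B : V →ₗ[ZMod ℓ] V →ₗ[ZMod ℓ] ZMod ℓ)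
    (halt : ∀ v : V, B v v = 0)
    (hnondeg : ∀ v : V, (∀ w : V, B v w = 0) → v = 0)
    (δ : V) (hδ : δ ≠ 0)
    (γ : V) (hγ : γ - B γ δ • δ ≠ γ)
    (δ' : V) (hδ' : δ' = (γ - B γ δ • δ) - γ)
    (a : ZMod ℓ) (ha : a = B γ δ') :
    a = -(B γ δ) ^ 2 ∧ a ≠ 0 ∧ (∃ s : ZMod ℓ, s ≠ 0 ∧ s ^ 2 = -a) ∧
      ∃ c : ZMod ℓ, c ^ 2 = -a⁻¹ ∧ (δ = c • δ' ∨ δ = -(c • δ')) := by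
  set b := B γ δ with hb
  have hb0 : b ≠ 0 := by
    intro h
    apply hγ
    rw [h, zero_smul, sub_zero]
  have hδ'' : δ' = -(b • δ) := by rw [hδ']; abel
  have ha2 : a = -b ^ 2 := by
    rw [ha, hδ'', map_neg, map_smul, smul_eq_mul, ← hb]; ring
  refine ⟨ha2, ?_, ⟨b, hb0, by rw [ha2]; ring⟩, b⁻¹, ?_, Or.inr ?_⟩
  · rw [ha2]
    simpa using pow_ne_zero 2 hb0
  · rw [ha2, inv_neg, neg_neg, ← inv_pow]
  · rw [hδ'', smul_neg, smul_smul, inv_mul_cancel₀ hb0, one_smul, neg_neg]
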